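/- The lattice D7 ⊕ A2 cannot be embedded in the lattice H ⊕ E8; that is, there is no 10 × 9 integer matrix M such that Mᵀ · G(H ⊕ E8) · M equals the Gram matrix of D7 ⊕ A2. -/

import Mathlib

/-
Suppose `M` embeds `L = D₇ ⊕ A₂` (negative definite, discriminant `12`) in the even unimodular
lattice `H ⊕ E₈` of signature `(1, 9)`. The orthogonal complement of the image is spanned by a
primitive vector `e`, and splitting `12 x` into its components along the image and along `e`
gives, for every `x`,
  `k (12 x² - ⟨w, N w⟩) = 12 (e · x)²`,  where `k = e²`, `w = Mᵀ G x`, `N = 12 G_L⁻¹`.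
A vector of positive norm forces `k > 0`, and `k` is even. By unimodularity some `x` has
`e · x = 1`, so `m = 12 / k ∈ {1, 2, 3, 6}` and `⟨w, N w⟩ = 12 x² - m ≡ -m (mod 8)`.
But `⟨w, N w⟩ = -3 |2λ|² - 8 (…)` for a weight `λ` of `D₇^*`, and the seven coordinates of
`2λ` have equal parity, so `⟨w, N w⟩ ≡ 0, 3 or 4 (mod 8)`.
-/

open Matrix

/-- Gram matrix of the ambient lattice (10 × 10). -/
def ambientGram : Matrix (Fin 10) (Fin 10) ℤ :=
  !![0, 1, 0, 0, 0, 0, 0, 0, 0, 0;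
      1, 0, 0, 0, 0, 0, 0, 0, 0, 0;
      0, 0, -2, 1, 0, 0, 0, 0, 0, 0;
      0, 0, 1, -2, 1, 0, 0, 0, 0, 0;
      0, 0, 0, 1, -2, 1, 0, 0, 0, 1;
      0, 0, 0, 0, 1, -2, 1, 0, 0, 0;
      0, 0, 0, 0, 0, 1, -2, 1, 0, 0;
      0, 0, 0, 0, 0, 0, 1, -2, 1, 0;
      0, 0, 0, 0, 0, 0, 0, 1, -2, 0;
      0, 0, 0, 0, 1, 0, 0, 0, 0, -2]

/-- Gram matrix of the root lattice to be embedded (9 × 9). -/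
def rootGram : Matrix (Fin 9) (Fin 9) ℤ :=
  !![-2, 1, 0, 0, 0, 0, 0, 0, 0;
      1, -2, 1, 0, 0, 0, 0, 0, 0;
      0, 1, -2, 1, 0, 0, 0, 0, 0;
      0, 0, 1, -2, 1, 0, 0, 0, 0;
      0, 0, 0, 1, -2, 1, 1, 0, 0;
      0, 0, 0, 0, 1, -2, 0, 0, 0;
      0, 0, 0, 0, 1, 0, -2, 0, 0;
      0, 0, 0, 0, 0, 0, 0, -2, 1;
      0, 0, 0, 0, 0, 0, 0, 1, -2]

open Finset

theorem eq_zero_of_mul_eq_zero_of_mulVec_eq_zero {R ι : Type*} [CommRing R] [IsDomain R]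
    {n : ℕ} {M : Matrix (Fin (n + 1)) (Fin n) R} {e : Fin (n + 1) → R}
    (hMe : ∀ (v : Fin n → R) (c : R), M *ᵥ v + c • e = 0 → v = 0 ∧ c = 0)
    {Z : Matrix ι (Fin (n + 1)) R} (hZM : Z * M = 0) (hZe : Z *ᵥ e = 0) : Z = 0 := by
  set A : Matrix (Fin (n + 1)) (Fin (n + 1)) R := Matrix.of fun i => Fin.snoc (M i) (e i)
  have hA : ∀ v, A *ᵥ v = M *ᵥ Fin.init v + v (Fin.last n) • e := by
    intro v
    ext i
    simp [A, mulVec, dotProduct, Fin.sum_univ_castSucc, Fin.init, mul_comm]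
  have hdet : A.det ≠ 0 := by
    intro h
    obtain ⟨v, hv, hAv⟩ := exists_mulVec_eq_zero_iff.mpr h
    obtain ⟨hinit, hlast⟩ := hMe _ _ ((hA v).symm.trans hAv)
    refine hv ?_
    rw [← Fin.snoc_init_self v, hinit, hlast]
    ext i
    induction i using Fin.lastCases <;> simp
  have hZA : Z * A = 0 := by
    ext i j
    induction j using Fin.lastCases with
    | last => simpa [A, mul_apply, mulVec, dotProduct] using congrFun hZe i
    | cast j => simpa [A, mul_apply] using congrFun (congrFun hZM i) j
  have hdetZ : A.det • Z = 0 := by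
    simpa [Matrix.mul_assoc, Matrix.mul_adjugate] using congrArg (· * A.adjugate) hZA
  ext i j
  simpa [hdet] using congrFun (congrFun hdetZ i) j

theorem exists_primitive_mulVec_eq_zero {κ ι : Type*} [Fintype κ] [Fintype ι]
    (B : Matrix κ ι ℤ) (h : Fintype.card κ < Fintype.card ι) :
    ∃ e a : ι → ℤ, B *ᵥ e = 0 ∧ a ⬝ᵥ e = 1 := by
  classical
  have : Nonempty ι := Fintype.card_pos_iff.mp (Nat.zero_lt_of_lt h)
  cases isEmpty_or_nonempty κ with
  | inl _ =>
    obtain ⟨i⟩ := ‹Nonempty ι›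
    exact ⟨Pi.single i 1, Pi.single i 1, Subsingleton.elim _ _, by simp⟩
  | inr _ =>
    obtain ⟨v, hv, hBv, -⟩ := Int.Matrix.exists_ne_zero_int_vec_norm_le B h Fintype.card_pos
    obtain ⟨e, hve, he⟩ := extract_gcd v univ_nonempty
    obtain ⟨a, ha⟩ := gcd_eq_sum_mul univ e
    have hd : univ.gcd v ≠ 0 := fun hd =>
      hv (funext fun i => gcd_eq_zero_iff.mp hd i (mem_univ i))
    refine ⟨e, a, ?_, ?_⟩
    · have hv' : v = univ.gcd v • e := funext fun i => hve i (mem_univ i)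
      rw [hv', mulVec_smul] at hBv
      exact (smul_eq_zero.mp hBv).resolve_left hd
    · rw [dotProduct_comm, dotProduct, ← ha, he]

theorem even_dotProduct_mulVec_self {ι : Type*} [Fintype ι] [LinearOrder ι]
    {G : Matrix ι ι ℤ} (hG : G.IsSymm) (hdiag : ∀ i, Even (G i i)) (x : ι → ℤ) :
    Even (x ⬝ᵥ (G *ᵥ x)) := by
  set U : Matrix ι ι ℤ := Matrix.of fun i j => if i < j then G i j else 0
  have hsplit : G = U + Uᵀ + diagonal (fun i => G i i) := by
    ext i j
    rcases lt_trichotomy i j with h | rfl | h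
    · simp [U, h, h.not_gt, h.ne]
    · simp [U]
    · simp [U, h, h.not_gt, h.ne', hG.apply i j]
  have hdiag' : Even (x ⬝ᵥ (diagonal (fun i => G i i) *ᵥ x)) := by
    simp only [dotProduct, mulVec_diagonal, even_iff_two_dvd]
    exact dvd_sum fun i _ =>
      Dvd.dvd.mul_left (Dvd.dvd.mul_right (even_iff_two_dvd.mp (hdiag i)) _) _
  rw [hsplit, add_mulVec, add_mulVec, dotProduct_add, dotProduct_add, dotProduct_mulVec x Uᵀ,
    vecMul_transpose, dotProduct_comm]
  exact Even.add ⟨_, rfl⟩ hdiag'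

theorem sum_sq_emod_eight_of_odd {ι : Type*} {s : Finset ι} {f : ι → ℤ}
    (hf : ∀ i ∈ s, Odd (f i)) : (∑ i ∈ s, f i ^ 2) % 8 = #s % 8 := by
  have hsq : ∀ i ∈ s, f i ^ 2 % 8 = 1 := by
    intro i hi
    obtain ⟨k, hk⟩ := hf i hi
    obtain ⟨j, hj⟩ := Int.even_mul_succ_self k
    have : f i ^ 2 = 8 * j + 1 := by rw [hk]; linear_combination 4 * hj
    omega
  rw [sum_int_mod, sum_congr rfl hsq]
  simp

theorem four_dvd_sum_sq_of_even {ι : Type*} {s : Finset ι} {f : ι → ℤ}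
    (hf : ∀ i ∈ s, Even (f i)) : 4 ∣ ∑ i ∈ s, f i ^ 2 :=
  dvd_sum fun i hi => by
    obtain ⟨k, hk⟩ := hf i hi
    exact ⟨k ^ 2, by rw [hk]; ring⟩

/-- When `N = c • (Mᵀ * G * M)⁻¹`, this is `c` times the norm of the component of `x` that is
`G`-orthogonal to the columns of `M`. -/
def complementNorm {ι κ : Type*} [Fintype ι] [Fintype κ] (G : Matrix ι ι ℤ) (M : Matrix ι κ ℤ)
    (N : Matrix κ κ ℤ) (c : ℤ) (x : ι → ℤ) : ℤ :=
  c * (x ⬝ᵥ (G *ᵥ x)) - (Mᵀ *ᵥ (G *ᵥ x)) ⬝ᵥ (N *ᵥ (Mᵀ *ᵥ (G *ᵥ x)))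

theorem complementNorm_pos {ι κ : Type*} [Fintype ι] [Fintype κ] {G : Matrix ι ι ℤ}
    {M : Matrix ι κ ℤ} {N : Matrix κ κ ℤ} {c : ℤ} {x : ι → ℤ} (hc : 0 < c)
    (hN : ∀ w, w ⬝ᵥ (N *ᵥ w) ≤ 0) (hx : 0 < x ⬝ᵥ (G *ᵥ x)) : 0 < complementNorm G M N c x := by
  have := hN (Mᵀ *ᵥ (G *ᵥ x))
  unfold complementNorm
  nlinarith

section Complement

variable {n : ℕ} {G : Matrix (Fin (n + 1)) (Fin (n + 1)) ℤ} {M : Matrix (Fin (n + 1)) (Fin n) ℤ}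
  {N : Matrix (Fin n) (Fin n) ℤ} {c : ℤ}

/-- `c • 1 - M * N * (Mᵀ * G)` is `c` times the `G`-orthogonal projection onto the complement
of the columns of `M`, which is the line through `e`. -/
theorem smul_sub_mul_eq_smul_vecMulVec {e : Fin (n + 1) → ℤ} (hc : c ≠ 0)
    (hN : N * (Mᵀ * G * M) = c • 1) (he : Mᵀ *ᵥ (G *ᵥ e) = 0) (he0 : e ≠ 0) :
    (e ⬝ᵥ (G *ᵥ e)) • (c • 1 - M * N * (Mᵀ * G)) = c • vecMulVec e (G *ᵥ e) := by
  have hMe : ∀ (v : Fin n → ℤ) (d : ℤ), M *ᵥ v + d • e = 0 → v = 0 ∧ d = 0 := by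
    intro v d h
    have hv := congrArg (fun y => N *ᵥ (Mᵀ *ᵥ (G *ᵥ y))) h
    simp only [mulVec_add, mulVec_smul, he, smul_zero, add_zero, mulVec_zero, mulVec_mulVec,
      ← Matrix.mul_assoc] at hv
    rw [Matrix.mul_assoc, Matrix.mul_assoc, ← Matrix.mul_assoc Mᵀ, hN, smul_mulVec,
      one_mulVec] at hv
    obtain rfl : v = 0 := (smul_eq_zero.mp hv).resolve_left hc
    rw [mulVec_zero, zero_add] at h
    exact ⟨rfl, (smul_eq_zero.mp h).resolve_right he0⟩
  rw [← sub_eq_zero]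
  refine eq_zero_of_mul_eq_zero_of_mulVec_eq_zero hMe ?_ ?_
  · rw [Matrix.mul_assoc Mᵀ] at hN
    simp only [Matrix.sub_mul, Matrix.smul_mul, Matrix.one_mul, vecMulVec_mul,
      ← mulVec_transpose, he, Matrix.mul_assoc, hN, Matrix.mul_smul, Matrix.mul_one, sub_self]
    ext
    simp [vecMulVec_apply]
  · simp only [sub_mulVec, smul_mulVec, one_mulVec, ← mulVec_mulVec, he, mulVec_zero,
      sub_zero, vecMulVec_mulVec, op_smul_eq_smul, dotProduct_comm (G *ᵥ e), smul_smul, mul_comm,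
      sub_self]

theorem mul_complementNorm_eq {e : Fin (n + 1) → ℤ} (hG : G.IsSymm) (hc : c ≠ 0)
    (hN : N * (Mᵀ * G * M) = c • 1) (he : Mᵀ *ᵥ (G *ᵥ e) = 0) (he0 : e ≠ 0)
    (x : Fin (n + 1) → ℤ) :
    (e ⬝ᵥ (G *ᵥ e)) * complementNorm G M N c x = c * (e ⬝ᵥ (G *ᵥ x)) ^ 2 := by
  have hsymm : ∀ u v, u ⬝ᵥ (G *ᵥ v) = v ⬝ᵥ (G *ᵥ u) := fun u v => by
    rw [dotProduct_mulVec, ← mulVec_transpose, hG.eq, dotProduct_comm]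
  have hM : ∀ y, x ⬝ᵥ (G *ᵥ (M *ᵥ y)) = (Mᵀ *ᵥ (G *ᵥ x)) ⬝ᵥ y := fun y => by
    rw [hsymm, dotProduct_comm, dotProduct_mulVec, ← mulVec_transpose]
  have h := congrArg (fun A => x ⬝ᵥ (G *ᵥ (A *ᵥ x)))
    (smul_sub_mul_eq_smul_vecMulVec hc hN he he0)
  simp only [smul_mulVec, sub_mulVec, one_mulVec, ← mulVec_mulVec, vecMulVec_mulVec,
    op_smul_eq_smul, mulVec_sub, mulVec_smul, dotProduct_sub, dotProduct_smul, hM,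
    smul_eq_mul] at h
  rw [dotProduct_comm (G *ᵥ e) x, hsymm x e] at h
  unfold complementNorm
  linear_combination h

/-- Here `e` spans the `G`-orthogonal complement of the columns of `M`, and `x` is a vector with
`e ⬝ᵥ (G *ᵥ x) = 1`, which exists because `G` is unimodular. -/
theorem exists_pos_mul_complementNorm_eq (hG : G.IsSymm)
    {G' : Matrix (Fin (n + 1)) (Fin (n + 1)) ℤ} (hG' : G * G' = 1) (hc : 0 < c)
    (hN : N * (Mᵀ * G * M) = c • 1) (hNneg : ∀ w, w ⬝ᵥ (N *ᵥ w) ≤ 0)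
    (hGpos : ∃ p, 0 < p ⬝ᵥ (G *ᵥ p)) :
    ∃ e x : Fin (n + 1) → ℤ,
      0 < e ⬝ᵥ (G *ᵥ e) ∧ (e ⬝ᵥ (G *ᵥ e)) * complementNorm G M N c x = c := by
  obtain ⟨e, a, he, hae⟩ := exists_primitive_mulVec_eq_zero (Mᵀ * G) (by simp)
  have he0 : e ≠ 0 := by
    rintro rfl
    simp at hae
  have key := mul_complementNorm_eq hG hc.ne' hN (by rwa [mulVec_mulVec]) he0
  have hx : (e ⬝ᵥ (G *ᵥ e)) * complementNorm G M N c (G' *ᵥ a) = c := by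
    rw [key, mulVec_mulVec, hG', one_mulVec, dotProduct_comm, hae, one_pow, mul_one]
  refine ⟨e, G' *ᵥ a, lt_of_le_of_ne ?_ ?_, hx⟩
  · obtain ⟨p, hp⟩ := hGpos
    have hkp : 0 ≤ (e ⬝ᵥ (G *ᵥ e)) * complementNorm G M N c p := by
      rw [key]
      positivity
    exact (mul_nonneg_iff_of_pos_right (complementNorm_pos hc hNneg hp)).mp hkp
  · intro hk
    rw [← hk, zero_mul] at hx
    exact hc.ne hx

end Complement

theorem eq_one_or_two_or_three_or_six_of_mul_eq_twelve {k m : ℤ} (hk : 0 < k) (hke : Even k)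
    (h : k * m = 12) : m = 1 ∨ m = 2 ∨ m = 3 ∨ m = 6 := by
  obtain ⟨j, rfl⟩ := hke
  have : j + j ≤ 12 := Int.le_of_dvd (by norm_num) ⟨m, h.symm⟩
  have : 0 < j := by omega
  have : j ≤ 6 := by omega
  interval_cases j <;> omega

/-- `12 • rootGram⁻¹`: the Gram matrix of the dual lattice `D₇^* ⊕ A₂^*`, in the basis dual to
the roots, scaled by `12`. -/
def rootGramDual : Matrix (Fin 9) (Fin 9) ℤ :=
  !![-12, -12, -12, -12, -12, -6, -6, 0, 0;
     -12, -24, -24, -24, -24, -12, -12, 0, 0;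
     -12, -24, -36, -36, -36, -18, -18, 0, 0;
     -12, -24, -36, -48, -48, -24, -24, 0, 0;
     -12, -24, -36, -48, -60, -30, -30, 0, 0;
     -6, -12, -18, -24, -30, -21, -15, 0, 0;
     -6, -12, -18, -24, -30, -15, -21, 0, 0;
     0, 0, 0, 0, 0, 0, 0, -8, -4;
     0, 0, 0, 0, 0, 0, 0, -4, -8]

theorem rootGramDual_mul_rootGram : rootGramDual * rootGram = (12 : ℤ) • 1 := by decide

/-- The coordinates of `2λ` in the standard model `D₇ ⊂ ℤ⁷`, where `λ` is the weight of `D₇^*` with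
fundamental-weight coordinates `w 0, …, w 6` (nodes `5` and `6` are the ends of the fork). All
seven have the parity of `w 5 + w 6`. -/
def d7WeightCoords (w : Fin 9 → ℤ) : Fin 7 → ℤ :=
  ![2 * (w 0 + w 1 + w 2 + w 3 + w 4) + w 5 + w 6, 2 * (w 1 + w 2 + w 3 + w 4) + w 5 + w 6,
    2 * (w 2 + w 3 + w 4) + w 5 + w 6, 2 * (w 3 + w 4) + w 5 + w 6, 2 * w 4 + w 5 + w 6,
    w 5 + w 6, w 5 - w 6]

theorem dotProduct_rootGramDual_mulVec (w : Fin 9 → ℤ) :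
    w ⬝ᵥ (rootGramDual *ᵥ w)
      = -3 * ∑ j, d7WeightCoords w j ^ 2 - 8 * (w 7 ^ 2 + w 7 * w 8 + w 8 ^ 2) := by
  simp [dotProduct, mulVec, Fin.sum_univ_succ, rootGramDual, d7WeightCoords]
  ring

theorem dotProduct_rootGramDual_mulVec_nonpos (w : Fin 9 → ℤ) :
    w ⬝ᵥ (rootGramDual *ᵥ w) ≤ 0 := by
  have : 0 ≤ ∑ j, d7WeightCoords w j ^ 2 := sum_nonneg fun j _ => sq_nonneg _
  rw [dotProduct_rootGramDual_mulVec]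
  nlinarith [sq_nonneg (w 7 + w 8), sq_nonneg (w 7), sq_nonneg (w 8)]

theorem not_eight_dvd_dotProduct_rootGramDual_mulVec_add (w : Fin 9 → ℤ) {m : ℤ}
    (hm : m = 1 ∨ m = 2 ∨ m = 3 ∨ m = 6) : ¬ 8 ∣ w ⬝ᵥ (rootGramDual *ᵥ w) + m := by
  have hpar : ∀ j, d7WeightCoords w j % 2 = (w 5 + w 6) % 2 := by
    intro j
    fin_cases j <;> simp [d7WeightCoords] <;> omega
  rw [dotProduct_rootGramDual_mulVec]
  rcases Int.emod_two_eq_zero_or_one (w 5 + w 6) with h | h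
  · obtain ⟨s, hs⟩ := four_dvd_sum_sq_of_even (s := univ) fun j _ =>
      Int.even_iff.mpr ((hpar j).trans h)
    omega
  · have := sum_sq_emod_eight_of_odd (s := univ) fun j _ => Int.odd_iff.mpr ((hpar j).trans h)
    rw [card_univ, Fintype.card_fin] at this
    omega

def ambientGramInv : Matrix (Fin 10) (Fin 10) ℤ :=
  !![0, 1, 0, 0, 0, 0, 0, 0, 0, 0;
     1, 0, 0, 0, 0, 0, 0, 0, 0, 0;
     0, 0, -4, -7, -10, -8, -6, -4, -2, -5;
     0, 0, -7, -14, -20, -16, -12, -8, -4, -10;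
     0, 0, -10, -20, -30, -24, -18, -12, -6, -15;
     0, 0, -8, -16, -24, -20, -15, -10, -5, -12;
     0, 0, -6, -12, -18, -15, -12, -8, -4, -9;
     0, 0, -4, -8, -12, -10, -8, -6, -3, -6;
     0, 0, -2, -4, -6, -5, -4, -3, -2, -3;
     0, 0, -5, -10, -15, -12, -9, -6, -3, -8]

theorem ambientGram_mul_ambientGramInv : ambientGram * ambientGramInv = 1 := by decide

theorem ambientGram_isSymm : ambientGram.IsSymm := by
  unfold Matrix.IsSymm
  decide

theorem even_ambientGram_apply_self (i : Fin 10) : Even (ambientGram i i) := by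
  fin_cases i <;> decide

theorem exists_dotProduct_ambientGram_mulVec_pos : ∃ p, 0 < p ⬝ᵥ (ambientGram *ᵥ p) :=
  ⟨![1, 1, 0, 0, 0, 0, 0, 0, 0, 0], by decide⟩

theorem stmt_4 :
    ¬ ∃ M : Matrix (Fin 10) (Fin 9) ℤ,
      Mᵀ * ambientGram * M = rootGram := by
  rintro ⟨M, hM⟩
  obtain ⟨e, x, hk, hkx⟩ := exists_pos_mul_complementNorm_eq ambientGram_isSymm
    ambientGram_mul_ambientGramInv (c := 12) (by norm_num) (by rw [hM, rootGramDual_mul_rootGram])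
    dotProduct_rootGramDual_mulVec_nonpos exists_dotProduct_ambientGram_mulVec_pos
  have hm := eq_one_or_two_or_three_or_six_of_mul_eq_twelve hk
    (even_dotProduct_mulVec_self ambientGram_isSymm even_ambientGram_apply_self e) hkx
  obtain ⟨r, hr⟩ := even_dotProduct_mulVec_self ambientGram_isSymm even_ambientGram_apply_self x
  refine not_eight_dvd_dotProduct_rootGramDual_mulVec_add (Mᵀ *ᵥ (ambientGram *ᵥ x)) hm
    ⟨3 * r, ?_⟩
  rw [complementNorm, hr]
  ring
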